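/- Let Σ, Λ be symmetric positive definite n×n matrices. Then V = 2·sym(Σ^{1/2}(Σ^{1/2}ΛΣ^{1/2})^{1/2}Σ^{−1/2}) − 2Σ is symmetric and the curve γ(t) = Σ + tV + t²S_Σ(V)ΣS_Σ(V) satisfies γ(0) = Σ and γ(1) = Λ. -/

import Mathlib

open Matrix

open Classical in
/-- The symmetric PSD square root of a PSD matrix (junk value `0` otherwise). -/
noncomputable def psdSqrt {n : ℕ} (A : Matrix (Fin n) (Fin n) ℝ) : Matrix (Fin n) (Fin n) ℝ :=
  if h : A.PosSemidef then
    (h.1.eigenvectorUnitary : Matrix (Fin n) (Fin n) ℝ) *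
      diagonal ((↑) ∘ (√·) ∘ h.1.eigenvalues) *
      (star h.1.eigenvectorUnitary : Matrix (Fin n) (Fin n) ℝ)
  else 0

/-- Symmetric part of a square matrix. -/
noncomputable def symPart {n : ℕ} (M : Matrix (Fin n) (Fin n) ℝ) : Matrix (Fin n) (Fin n) ℝ :=
  (1 / 2 : ℝ) • (M + Mᵀ)

/-!
With `T = Σ^{1/2}` and `M = (T Λ T)^{1/2}`, the matrix `P = T⁻¹ M T⁻¹` is symmetric, satisfies
`Σ P = T M T⁻¹` and `P Σ P = Λ`. Hence `V = ΣP + PΣ - 2Σ = Σ(P - 1) + (P - 1)Σ`, so `P - 1` solves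
the Sylvester equation, and it is the only symmetric solution because `ΣD + DΣ = 0` forces `D = 0`
for positive definite `Σ`. Finally `Σ + V + (P - 1)Σ(P - 1) = PΣP = Λ`.
-/

open scoped ComplexOrder

namespace Matrix.PosDef

theorem eq_zero_of_mul_add_mul_eq_zero {m 𝕜 : Type*} [Fintype m] [RCLike 𝕜]
    {A D : Matrix m m 𝕜} (hA : A.PosDef) (hD : D.IsHermitian) (h : A * D + D * A = 0) :
    D = 0 := by
  -- `D A = -A D` makes the trace of the positive semidefinite `Dᴴ A D` equal to its negative.
  have htrace : (Dᴴ * A * D).trace = 0 := by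
    have hanti : D * A * D = -(A * D * D) := by
      rw [eq_neg_of_add_eq_zero_right h, neg_mul, mul_assoc]
    rw [hD.eq, ← self_eq_neg]
    nth_rewrite 1 [hanti]
    rw [trace_neg, trace_mul_comm (A * D), mul_assoc]
  have hzero : Dᴴ * A * D = 0 :=
    (hA.posSemidef.conjTranspose_mul_mul_same D).trace_eq_zero_iff.mp htrace
  refine ext_iff_mulVec.mpr fun x ↦ ?_
  by_contra hx
  have hpos := hA.dotProduct_mulVec_pos (x := D *ᵥ x) (by simpa using hx)
  simp only [star_mulVec, dotProduct_mulVec, vecMul_vecMul] at hpos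
  simp [hzero] at hpos

end Matrix.PosDef

section PsdSqrt

variable {n : ℕ} {A B : Matrix (Fin n) (Fin n) ℝ}

lemma psdSqrt_mul_self (hA : A.PosSemidef) : psdSqrt A * psdSqrt A = A := by
  classical
  rw [psdSqrt, dif_pos hA]
  set U : Matrix (Fin n) (Fin n) ℝ := (hA.1.eigenvectorUnitary : Matrix (Fin n) (Fin n) ℝ)
  have hU : star U * U = 1 := Unitary.coe_star_mul_self _
  have hsqrt : diagonal ((↑) ∘ (√·) ∘ hA.1.eigenvalues) *
      diagonal ((↑) ∘ (√·) ∘ hA.1.eigenvalues) = diagonal (((↑) : ℝ → ℝ) ∘ hA.1.eigenvalues) := by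
    simp [diagonal_mul_diagonal, Real.mul_self_sqrt (hA.eigenvalues_nonneg _)]
  conv_rhs => rw [hA.1.spectral_theorem, Unitary.conjStarAlgAut_apply]
  calc _ = U * (diagonal ((↑) ∘ (√·) ∘ hA.1.eigenvalues) * (star U * U) *
        diagonal ((↑) ∘ (√·) ∘ hA.1.eigenvalues)) * star U := by simp only [mul_assoc]
    _ = _ := by rw [hU, mul_one, hsqrt]; rfl

lemma transpose_psdSqrt (hA : A.PosSemidef) : (psdSqrt A)ᵀ = psdSqrt A := by
  rw [psdSqrt, dif_pos hA, star_eq_conjTranspose, conjTranspose_eq_transpose_of_trivial,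
    transpose_mul, transpose_mul, transpose_transpose, diagonal_transpose, mul_assoc]

lemma isUnit_det_psdSqrt (hA : A.PosDef) : IsUnit (psdSqrt A).det :=
  isUnit_of_mul_isUnit_left (y := (psdSqrt A).det) <| by
    rw [← det_mul, psdSqrt_mul_self hA.posSemidef]
    exact isUnit_iff_ne_zero.mpr hA.det_pos.ne'

lemma posSemidef_psdSqrt_mul_mul_psdSqrt (hA : A.PosSemidef) (hB : B.PosSemidef) :
    (psdSqrt A * B * psdSqrt A).PosSemidef := by
  simpa [conjTranspose_eq_transpose_of_trivial, transpose_psdSqrt hA]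
    using hB.mul_mul_conjTranspose_same (psdSqrt A)

end PsdSqrt

lemma two_smul_symPart {n : ℕ} (M : Matrix (Fin n) (Fin n) ℝ) :
    (2 : ℝ) • symPart M = M + Mᵀ := by
  rw [symPart, smul_smul]
  norm_num

section TransportMap

variable {n : ℕ} {A B : Matrix (Fin n) (Fin n) ℝ}

/-- The optimal transport map `Σ^{-1/2} (Σ^{1/2} Λ Σ^{1/2})^{1/2} Σ^{-1/2}` from `Σ` to `Λ`. -/
noncomputable def transportMap (A B : Matrix (Fin n) (Fin n) ℝ) : Matrix (Fin n) (Fin n) ℝ :=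
  (psdSqrt A)⁻¹ * psdSqrt (psdSqrt A * B * psdSqrt A) * (psdSqrt A)⁻¹

lemma transpose_transportMap (hA : A.PosSemidef) (hB : B.PosSemidef) :
    (transportMap A B)ᵀ = transportMap A B := by
  rw [transportMap, transpose_mul, transpose_mul, transpose_nonsing_inv, transpose_psdSqrt hA,
    transpose_psdSqrt (posSemidef_psdSqrt_mul_mul_psdSqrt hA hB), ← mul_assoc]

lemma mul_transportMap (hA : A.PosDef) :
    A * transportMap A B =
      psdSqrt A * psdSqrt (psdSqrt A * B * psdSqrt A) * (psdSqrt A)⁻¹ := by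
  rw [transportMap]
  conv_lhs => arg 1; rw [← psdSqrt_mul_self hA.posSemidef]
  simp only [mul_assoc, mul_nonsing_inv_cancel_left _ _ (isUnit_det_psdSqrt hA)]

lemma transportMap_mul_mul_transportMap (hA : A.PosDef) (hB : B.PosSemidef) :
    transportMap A B * A * transportMap A B = B := by
  have hT := isUnit_det_psdSqrt hA
  have hM := psdSqrt_mul_self (posSemidef_psdSqrt_mul_mul_psdSqrt hA.posSemidef hB)
  rw [mul_assoc, mul_transportMap hA, transportMap]
  set T := psdSqrt A
  set M := psdSqrt (T * B * T)
  simp only [mul_assoc, nonsing_inv_mul_cancel_left _ _ hT]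
  rw [← mul_assoc M, hM]
  simp only [mul_assoc, nonsing_inv_mul_cancel_left _ _ hT, mul_nonsing_inv _ hT, mul_one]

end TransportMap

theorem buresWasserstein_log_full_rank (n : ℕ) (A B : Matrix (Fin n) (Fin n) ℝ)
    (hA : A.PosDef) (hB : B.PosDef)
    (V : Matrix (Fin n) (Fin n) ℝ)
    (hV : V = (2 : ℝ) • symPart
        (psdSqrt A * psdSqrt (psdSqrt A * B * psdSqrt A) * (psdSqrt A)⁻¹)
      - (2 : ℝ) • A) :
    Vᵀ = V ∧
    ∀ S : Matrix (Fin n) (Fin n) ℝ, Sᵀ = S → A * S + S * A = V →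
      (A + (0 : ℝ) • V + ((0 : ℝ) ^ 2) • (S * A * S) = A ∧
       A + (1 : ℝ) • V + ((1 : ℝ) ^ 2) • (S * A * S) = B) := by
  set P := transportMap A B
  have hP : Pᵀ = P := transpose_transportMap hA.posSemidef hB.posSemidef
  have hAt : Aᵀ = A := by simpa [conjTranspose_eq_transpose_of_trivial] using hA.isHermitian.eq
  have hVP : V = A * (P - 1) + (P - 1) * A := by
    rw [hV, ← mul_transportMap hA, two_smul_symPart, transpose_mul, hP, hAt, two_smul]
    noncomm_ring
  refine ⟨by rw [hVP, transpose_add, transpose_mul, transpose_mul, transpose_sub, hP, hAt,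
    transpose_one, add_comm], fun S hS hSV ↦ ?_⟩
  obtain rfl : S = P - 1 := by
    refine sub_eq_zero.mp (hA.eq_zero_of_mul_add_mul_eq_zero ?_ ?_)
    · simp [IsHermitian, conjTranspose_eq_transpose_of_trivial, hS, hP]
    · rw [hVP] at hSV
      linear_combination (norm := noncomm_ring) hSV
  refine ⟨by simp, ?_⟩
  calc A + (1 : ℝ) • V + ((1 : ℝ) ^ 2) • ((P - 1) * A * (P - 1)) = P * A * P := by
        rw [hVP, one_smul, one_pow, one_smul]
        noncomm_ring
    _ = B := transportMap_mul_mul_transportMap hA hB.posSemidef
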